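/- arXiv:2202.07139 — 7 statements merged into one kernel-verified Lean document; each statement's English description precedes it below -/
import Mathlib

section
/- Let x ∈ (Z_d)^N, and enumerate the orbit of x under cyclic shifts as distinct tuples (i_1^{(j)},...,i_N^{(j)}), j ∈ Z_k. Then the truncated (N-1)-tuples (i_2^{(j)},...,i_N^{(j)}), j ∈ Z_k, are pairwise distinct. -/
/-!
Two shifts `x (· + a)` and `x (· + b)` with equal truncations agree away from the index `0`, and one
is the other composed with the permutation `· + (b - a)`. A permutation `σ` of a finite set with
`x ∘ σ = x` away from a single point `a` fixes `x` at `a` as well: otherwise the fibre of `x ∘ σ`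
over `x a` would be the fibre of `x` with `a` removed, while `σ` makes them equinumerous.
-/

open Finset

theorem Equiv.Perm.comp_eq_of_forall_ne {ι α : Type*} [Finite ι] (σ : Equiv.Perm ι)
    (x : ι → α) (a : ι) (h : ∀ t ≠ a, x (σ t) = x t) : x ∘ σ = x := by
  classical
  have := Fintype.ofFinite ι
  funext t
  rcases ne_or_eq t a with hta | rfl
  · exact h t hta
  by_contra hne
  have hcard : #{s | x (σ s) = x t} = #{s | x s = x t} := by
    simp only [← Fintype.card_subtype]
    exact Fintype.card_congr (σ.subtypeEquiv fun _ => Iff.rfl)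
  have herase : ({s | x (σ s) = x t} : Finset ι) = ({s | x s = x t} : Finset ι).erase t := by
    ext s
    by_cases hst : s = t
    · subst hst; simpa using hne
    · simp [hst, h s hst]
  have hmem : t ∈ ({s | x s = x t} : Finset ι) := by simp
  rw [herase, card_erase_of_mem hmem] at hcard
  have := card_pos.mpr ⟨t, hmem⟩
  omega

theorem shift_eq_shift_of_forall_ne_zero {G α : Type*} [AddGroup G] [Finite G]
    (x : G → α) (a b : G) (h : ∀ i ≠ 0, x (i + a) = x (i + b)) :
    (fun i => x (i + a)) = fun i => x (i + b) := by
  have hperm := (Equiv.addRight (b - a)).comp_eq_of_forall_ne (fun i => x (i + a)) 0 fun i hi => by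
    simpa [add_assoc] using (h i hi).symm
  funext i
  simpa [add_assoc] using (congrFun hperm i).symm

open Fin.NatCast in
theorem stmt5_general (d N k : ℕ)
    (x : Fin (N + 1) → Fin d)
    (f : Fin k → (Fin (N + 1) → Fin d))
    (hinj : Function.Injective f)
    (horb : ∀ j, ∃ r : ℕ, f j = fun i => x (i + (r : Fin (N + 1)))) :
    Function.Injective (fun j : Fin k => fun i : Fin N => f j i.succ) := by
  intro j₁ j₂ htrunc
  obtain ⟨r₁, hr₁⟩ := horb j₁
  obtain ⟨r₂, hr₂⟩ := horb j₂
  apply hinj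
  rw [hr₁, hr₂]
  refine shift_eq_shift_of_forall_ne_zero x _ _ fun i hi => ?_
  obtain ⟨i, rfl⟩ := Fin.exists_succ_eq.mpr hi
  simpa [hr₁, hr₂] using congrFun htrunc i

open Fin.NatCast in
/-- Enumerate the orbit of a tuple x ∈ (Z_d)^{N+1} under cyclic shifts as
distinct tuples f 0, ..., f (k-1).  Then deleting the first coordinate of each
orbit element still yields pairwise distinct N-tuples. -/
theorem stmt5 (d N k : ℕ) [NeZero d] (hd : 2 ≤ d) (hN : 1 ≤ N)
    (x : Fin (N + 1) → Fin d)
    (f : Fin k → (Fin (N + 1) → Fin d))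
    (hinj : Function.Injective f)
    (horb : ∀ j, ∃ r : ℕ, f j = fun i => x (i + (r : Fin (N + 1))))
    (hall : ∀ r : ℕ, ∃ j, f j = fun i => x (i + (r : Fin (N + 1)))) :
    Function.Injective (fun j : Fin k => fun i : Fin N => f j i.succ) :=
  stmt5_general d N k x f hinj horb
end

section
/- Let x ∈ (Z_d)^N have at least one zero coordinate with x ≠ (0,...,0), with orbit under cyclic shifts {(i_1^{(j)},...,i_N^{(j)}) : j ∈ Z_k}, k ≥ 2. Then each state |ψ_s⟩ = Σ_{j∈Z_k} ω_k^{sj} |i_1^{(j)}⟩⊗...⊗|i_N^{(j)}⟩ (s ∈ Z_k) has Schmidt rank at least 2 across the bipartition A_1 | A_2...A_N; i.e., it is entangled in that cut. -/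
/-!
Since `x` has a zero and a nonzero coordinate, two cyclic shifts `v, w` of `x` start with
different digits. The entries at `(v 0, tail v)` and `(w 0, tail w)` are roots of unity, while
the entry at `(w 0, tail v)` vanishes: the word `w 0 :: tail v` has a different multiset of
digits than `x`, so it is not a cyclic shift of `x`. This triangular `2 × 2` minor has nonzero
determinant.
-/

open Finset

theorem Matrix.two_le_rank_of_minor_triangular {m n R : Type*} [Fintype n] [CommRing R]
    [IsDomain R] (M : Matrix m n R) {r₁ r₂ : m} {c₁ c₂ : n} (h₁ : M r₁ c₁ ≠ 0)
    (h₂ : M r₂ c₂ ≠ 0) (h₂₁ : M r₂ c₁ = 0) : 2 ≤ M.rank := by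
  have hdet : (M.submatrix ![r₁, r₂] ![c₁, c₂]).det ≠ 0 := by
    rw [Matrix.det_fin_two]
    simp [h₁, h₂, h₂₁]
  calc 2 = (M.submatrix ![r₁, r₂] ![c₁, c₂]).rank := by
        rw [Matrix.rank_of_det_ne_zero hdet, Fintype.card_fin]
    _ ≤ M.rank := M.rank_submatrix_le _ _

theorem Fin.map_univ_val_comp_add_right {α : Type*} {m : ℕ} [NeZero m] (x : Fin m → α)
    (c : Fin m) :
    univ.val.map (fun i => x (i + c)) = univ.val.map x := by
  conv_rhs => rw [← Multiset.map_univ_val_equiv (Equiv.addRight c), Multiset.map_map]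
  rfl

theorem Fin.eq_of_map_univ_val_cons_eq {α : Type*} {n : ℕ} {a b : α} {t : Fin n → α}
    (h : univ.val.map (Fin.cons a t : Fin (n + 1) → α) = univ.val.map (Fin.cons b t)) :
    a = b := by
  rw [Fin.univ_val_map, Fin.univ_val_map, List.ofFn_succ, List.ofFn_succ, ← Multiset.cons_coe,
    ← Multiset.cons_coe] at h
  simp only [Fin.cons_zero, Fin.cons_succ] at h
  exact (Multiset.cons_inj_left _).mp h

theorem stmt8_general (d N k : ℕ) [NeZero d]
    (x : Fin (N + 1) → Fin d) (hx0 : ∃ i, x i = 0) (hxne : x ≠ 0)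
    (f : Fin k → (Fin (N + 1) → Fin d))
    (hinj : Function.Injective f)
    (horb : ∀ j, ∃ r : ℕ, f j = fun i => x (i + Fin.ofNat (N + 1) r))
    (hall : ∀ r : ℕ, ∃ j, f j = fun i => x (i + Fin.ofNat (N + 1) r))
    (s : Fin k) :
    2 ≤ (Matrix.of (fun (a : Fin d) (b : Fin N → Fin d) =>
      ∑ j : Fin k, if Fin.cons a b = f j then
        Complex.exp (2 * Real.pi * Complex.I * (s.val : ℂ) * (j.val : ℂ) / (k : ℂ))
      else 0)).rank := by
  obtain ⟨i₀, hi₀⟩ := hx0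
  obtain ⟨i₁, hi₁⟩ : ∃ i, x i ≠ 0 := by
    by_contra! h
    exact hxne (funext h)
  obtain ⟨j₀, hj₀⟩ := hall i₀
  obtain ⟨j₁, hj₁⟩ := hall i₁
  have hhead : f j₀ 0 ≠ f j₁ 0 := by
    simpa [hj₀, hj₁, Fin.ofNat_val_eq_self, hi₀] using hi₁.symm
  have hvalues : ∀ j, univ.val.map (f j) = univ.val.map x := by
    intro j
    obtain ⟨r, hr⟩ := horb j
    rw [hr, Fin.map_univ_val_comp_add_right]
  refine Matrix.two_le_rank_of_minor_triangular _ (r₁ := f j₀ 0) (c₁ := Fin.tail (f j₀))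
    (r₂ := f j₁ 0) (c₂ := Fin.tail (f j₁)) ?diag₀ ?diag₁ ?off
  case off =>
    rw [Matrix.of_apply]
    refine sum_eq_zero fun j _ => if_neg fun hj => hhead ?_
    refine (Fin.eq_of_map_univ_val_cons_eq (t := Fin.tail (f j₀)) ?_).symm
    rw [hj, Fin.cons_self_tail, hvalues, hvalues]
  all_goals
    simp only [Matrix.of_apply, Fin.cons_self_tail, hinj.eq_iff, sum_ite_eq, mem_univ,
      if_true]
    exact Complex.exp_ne_zero _

/-- Let x ∈ (Z_d)^{N+1} have a zero coordinate and not be the all-zero tuple,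
with orbit under cyclic shifts enumerated (without repetition) by
f : Fin k → (Z_d)^{N+1}, k ≥ 2.  Then each state
|ψ_s⟩ = Σ_j ω_k^{sj} |i_1^{(j)}⟩⊗...⊗|i_{N+1}^{(j)}⟩ has Schmidt rank at
least 2 across the bipartition A_1 | A_2...A_{N+1}, i.e. it is entangled in
that cut. -/
theorem stmt8 (d N k : ℕ) [NeZero d] (hd : 2 ≤ d) (hN : 1 ≤ N) (hk : 2 ≤ k)
    (x : Fin (N + 1) → Fin d) (hx0 : ∃ i, x i = 0) (hxne : x ≠ 0)
    (f : Fin k → (Fin (N + 1) → Fin d))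
    (hinj : Function.Injective f)
    (horb : ∀ j, ∃ r : ℕ, f j = fun i => x (i + Fin.ofNat (N + 1) r))
    (hall : ∀ r : ℕ, ∃ j, f j = fun i => x (i + Fin.ofNat (N + 1) r))
    (s : Fin k) :
    2 ≤ (Matrix.of (fun (a : Fin d) (b : Fin N → Fin d) =>
      ∑ j : Fin k, if Fin.cons a b = f j then
        Complex.exp (2 * Real.pi * Complex.I * (s.val : ℂ) * (j.val : ℂ) / (k : ℂ))
      else 0)).rank :=
  stmt8_general d N k x hx0 hxne f hinj horb hall s
end

section
/- (Zero-forcing lemma) Let E be a d_2×d_2 Hermitian matrix with entries a_{i,j} in the computational basis of ℂ^{d_2}. Suppose {|ψ_i⟩ = Σ_{j∈Z_m} b_{i,j}|p_j⟩|r_j⟩}_{i∈Z_m} and {|φ_k⟩ = Σ_{ℓ∈Z_n} c_{k,ℓ}|q_ℓ⟩|s_ℓ⟩}_{k∈Z_n} are two families of pairwise orthogonal vectors in ℂ^{d_1}⊗ℂ^{d_2}, where the r_j are distinct elements of Z_{d_2}, the s_ℓ are distinct elements of Z_{d_2}, and p_j, q_ℓ ∈ Z_{d_1}. If ⟨ψ_i|(I⊗E)|φ_k⟩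 = 0 for all i ∈ Z_m, k ∈ Z_n, then for any j, ℓ with p_j = q_ℓ one has a_{r_j,s_ℓ} = a_{s_ℓ,r_j} = 0. -/
/-!
Let Ψ and Φ be the matrices whose rows are the ψᵢ and φₖ. Then Ψ = B P and Φ = C Q, where P and Q
are the 0/1 matrices picking out the basis vectors |p_j⟩|r_j⟩ and |q_ℓ⟩|s_ℓ⟩. Since the r_j are
distinct, P Pᴴ = 1, so B Bᴴ = Ψ Ψᴴ, which by orthogonality is diagonal with positive entries; hence
B is invertible, and likewise C. The hypothesis says conj(Ψ) (I ⊗ E) Φᵀ = 0, that is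
conj(B) M Cᵀ = 0 with M = P (I ⊗ E) Qᵀ, so M = 0. The (j, ℓ) entry of M is a_{r_j,s_ℓ} whenever
p_j = q_ℓ, and a_{s_ℓ,r_j} is its conjugate.
-/

open Matrix Function
open scoped Kronecker

namespace Matrix

variable {ι κ α β R : Type*}

theorem of_sum_ite_eq_mul_submatrix_one [Fintype κ] [DecidableEq α] [NonAssocSemiring R]
    (B : Matrix ι κ R) (e : κ → α) :
    of (fun i x => ∑ j, if x = e j then B i j else 0) = B * (1 : Matrix α α R).submatrix e id := by
  ext i x
  simp [mul_apply, one_apply, eq_comm]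

theorem submatrix_one_mul_conjTranspose_self [Fintype α] [DecidableEq α] [DecidableEq κ]
    [NonAssocSemiring R] [StarRing R] {e : κ → α} (he : Injective e) :
    (1 : Matrix α α R).submatrix e id * ((1 : Matrix α α R).submatrix e id)ᴴ = 1 := by
  rw [conjTranspose_submatrix, conjTranspose_one, ← submatrix_mul _ _ _ _ _ bijective_id,
    Matrix.one_mul, submatrix_one _ he]

theorem submatrix_one_mul_mul_transpose_submatrix_one [Fintype α] [DecidableEq α] [Fintype β]
    [DecidableEq β] [NonAssocSemiring R] (K : Matrix α β R) (e : ι → α) (f : κ → β) :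
    (1 : Matrix α α R).submatrix e id * K * ((1 : Matrix β β R).submatrix f id)ᵀ =
      K.submatrix e f := by
  rw [transpose_submatrix, transpose_one, ← K.submatrix_id_id,
    ← submatrix_mul _ _ _ _ _ bijective_id, ← submatrix_mul _ _ _ _ _ bijective_id,
    Matrix.one_mul, Matrix.mul_one, submatrix_id_id]

theorem isUnit_det_mul_conjTranspose_self [Fintype ι] [DecidableEq ι] [Fintype α] [Field R]
    [StarRing R] [PartialOrder R] [StarOrderedRing R] (A : Matrix ι α R)
    (horth : ∀ i i', i ≠ i' → star (A i) ⬝ᵥ A i' = 0) (hne : ∀ i, A i ≠ 0) :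
    IsUnit (A * Aᴴ).det := by
  have hdiag : A * Aᴴ = diagonal fun i => A i ⬝ᵥ star (A i) := by
    ext i i'
    rcases eq_or_ne i i' with rfl | h
    · simp [mul_apply, dotProduct]
    · rw [diagonal_apply_ne _ h, mul_apply, ← star_eq_zero, ← horth i i' h]
      simp [dotProduct, star_sum, mul_comm]
  rw [hdiag, det_diagonal, isUnit_iff_ne_zero, Finset.prod_ne_zero_iff]
  exact fun i _ => dotProduct_self_star_eq_zero.not.mpr (hne i)

theorem isUnit_det_of_orthogonal_rows_mul_submatrix_one [Fintype ι] [DecidableEq ι] [Fintype α]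
    [DecidableEq α] [Field R] [StarRing R] [PartialOrder R] [StarOrderedRing R]
    (B : Matrix ι ι R) {e : ι → α} (he : Injective e)
    (horth : ∀ i i', i ≠ i' → star ((B * (1 : Matrix α α R).submatrix e id) i) ⬝ᵥ
      (B * (1 : Matrix α α R).submatrix e id) i' = 0)
    (hne : ∀ i, (B * (1 : Matrix α α R).submatrix e id) i ≠ 0) :
    IsUnit B.det := by
  have hgram := isUnit_det_mul_conjTranspose_self _ horth hne
  rw [conjTranspose_mul, Matrix.mul_assoc, ← Matrix.mul_assoc (submatrix _ _ _),
    submatrix_one_mul_conjTranspose_self he, Matrix.one_mul, det_mul] at hgram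
  exact isUnit_of_mul_isUnit_left hgram

theorem eq_zero_of_mul_mul_eq_zero [Fintype ι] [DecidableEq ι] [Fintype κ] [DecidableEq κ]
    [CommRing R] {A : Matrix ι ι R} {C : Matrix κ κ R} (hA : IsUnit A.det) (hC : IsUnit C.det)
    {M : Matrix ι κ R} (h : A * M * C = 0) : M = 0 := by
  rw [← nonsing_inv_mul_cancel_left A M hA, ← mul_nonsing_inv_cancel_right C (A * M) hC, h,
    Matrix.zero_mul, Matrix.mul_zero]

theorem conjTranspose_transpose_mul_one_kronecker_mul_transpose_apply [Fintype α] [DecidableEq α]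
    [Fintype β] [CommSemiring R] [StarRing R] (Ψ : Matrix ι (α × β) R) (E : Matrix β β R)
    (Φ : Matrix κ (α × β) R) (i : ι) (k : κ) :
    (Ψᴴᵀ * ((1 : Matrix α α R) ⊗ₖ E) * Φᵀ) i k =
      ∑ x, ∑ y, ∑ y', star (Ψ i (x, y)) * E y y' * Φ k (x, y') := by
  simp only [mul_apply, transpose_apply, conjTranspose_apply, kroneckerMap_apply, one_apply,
    ite_mul, one_mul, zero_mul, mul_ite, mul_zero, Fintype.sum_prod_type, Finset.sum_ite_irrel,
    Finset.sum_const_zero, Finset.sum_ite_eq', Finset.mem_univ, ↓reduceIte, Finset.sum_mul]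
  exact Finset.sum_congr rfl fun _ _ => Finset.sum_comm

end Matrix

/-- Zero-forcing lemma.  E is a Hermitian d_2×d_2 matrix,
{ψ_i = Σ_j b_{i,j}|p_j⟩|r_j⟩} and {φ_k = Σ_ℓ c_{k,ℓ}|q_ℓ⟩|s_ℓ⟩} are two
families of pairwise orthogonal (nonzero) vectors in ℂ^{d_1}⊗ℂ^{d_2} with the
r_j distinct and the s_ℓ distinct.  If ⟨ψ_i|(I⊗E)|φ_k⟩ = 0 for all i, k, then
p_j = q_ℓ forces a_{r_j,s_ℓ} = a_{s_ℓ,r_j} = 0. -/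
theorem stmt11 (d1 d2 m n : ℕ)
    (E : Matrix (Fin d2) (Fin d2) ℂ) (hE : E.IsHermitian)
    (b : Fin m → Fin m → ℂ) (c : Fin n → Fin n → ℂ)
    (p : Fin m → Fin d1) (q : Fin n → Fin d1)
    (r : Fin m → Fin d2) (s : Fin n → Fin d2)
    (hr : Function.Injective r) (hs : Function.Injective s)
    (ψ : Fin m → (Fin d1 × Fin d2 → ℂ)) (φ : Fin n → (Fin d1 × Fin d2 → ℂ))
    (hψ : ∀ i, ψ i = fun pr => ∑ j, if pr = (p j, r j) then b i j else 0)
    (hφ : ∀ k, φ k = fun pr => ∑ l, if pr = (q l, s l) then c k l else 0)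
    (hψo : ∀ i i', i ≠ i' → ∑ pr : Fin d1 × Fin d2, star (ψ i pr) * ψ i' pr = 0)
    (hψn : ∀ i, ψ i ≠ 0)
    (hφo : ∀ k k', k ≠ k' → ∑ pr : Fin d1 × Fin d2, star (φ k pr) * φ k' pr = 0)
    (hφn : ∀ k, φ k ≠ 0)
    (horth : ∀ i k, ∑ x : Fin d1, ∑ y : Fin d2, ∑ y' : Fin d2,
        star (ψ i (x, y)) * E y y' * φ k (x, y') = 0)
    (j : Fin m) (l : Fin n) (hpq : p j = q l) :
    E (r j) (s l) = 0 ∧ E (s l) (r j) = 0 := by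
  open scoped ComplexOrder in
  have hΨ : of ψ = of b * (1 : Matrix _ _ ℂ).submatrix (fun j => (p j, r j)) id :=
    (congrArg of (funext hψ)).trans (of_sum_ite_eq_mul_submatrix_one _ _)
  have hΦ : of φ = of c * (1 : Matrix _ _ ℂ).submatrix (fun l => (q l, s l)) id :=
    (congrArg of (funext hφ)).trans (of_sum_ite_eq_mul_submatrix_one _ _)
  have hB : IsUnit (of b).det := isUnit_det_of_orthogonal_rows_mul_submatrix_one _
    (fun _ _ h => hr (congrArg Prod.snd h)) (by rw [← hΨ]; exact hψo) (by rw [← hΨ]; exact hψn)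
  have hC : IsUnit (of c).det := isUnit_det_of_orthogonal_rows_mul_submatrix_one _
    (fun _ _ h => hs (congrArg Prod.snd h)) (by rw [← hΦ]; exact hφo) (by rw [← hΦ]; exact hφn)
  set K := (1 : Matrix (Fin d1) (Fin d1) ℂ) ⊗ₖ E
  have hsandwich : (of ψ)ᴴᵀ * K * (of φ)ᵀ =
      (of b)ᴴᵀ * K.submatrix (fun j => (p j, r j)) (fun l => (q l, s l)) * (of c)ᵀ := by
    rw [hΨ, hΦ, conjTranspose_mul, transpose_mul, transpose_mul, conjTranspose_submatrix,
      conjTranspose_one, transpose_submatrix, transpose_one,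
      ← submatrix_one_mul_mul_transpose_submatrix_one K]
    simp only [Matrix.mul_assoc]
  have hK : K.submatrix (fun j => (p j, r j)) (fun l => (q l, s l)) = 0 := by
    refine eq_zero_of_mul_mul_eq_zero (A := (of b)ᴴᵀ) (C := (of c)ᵀ) ?_ ?_ ?_
    · simpa [det_conjTranspose] using hB
    · simpa using hC
    · ext i k
      rw [← hsandwich, conjTranspose_transpose_mul_one_kronecker_mul_transpose_apply]
      exact horth i k
  have hEjl : E (r j) (s l) = 0 := by simpa [K, hpq] using congrFun₂ hK j l
  exact ⟨hEjl, by rw [← hE.apply, hEjl, star_zero]⟩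
end

section
/- (Diagonal-equalizing lemma) Let E be a d_2×d_2 Hermitian matrix with entries a_{i,j}. Let {|ψ_i⟩ = Σ_{j∈Z_m} b_{i,j}|p_j⟩|r_j⟩}_{i∈Z_m} be pairwise orthogonal vectors in ℂ^{d_1}⊗ℂ^{d_2}, where the r_j ∈ Z_{d_2} are pairwise distinct and p_j ∈ Z_{d_1}, and suppose ⟨ψ_i|(I⊗E)|ψ_k⟩ = 0 for all i ≠ k. If there is an index t ∈ Z_m with a_{r_t,r_j} = 0 for all j ≠ t and b_{i,t} ≠ 0 for all i, then: (1) a_{r_i,r_j} = a_{r_j,r_i} = 0 whenever i ≠ j and p_i = p_j; and (2) a_{r_i,r_i} = a_{r_0,r_0} for all i ∈ Z_m. -/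
lemma stmt14.reorder5 {α β γ δ ε M : Type*} [Fintype α] [Fintype β] [Fintype γ] [Fintype δ]
    [Fintype ε] [AddCommMonoid M] (f : α → β → γ → δ → ε → M) :
    ∑ x, ∑ y, ∑ z, ∑ j, ∑ j', f x y z j j'
      = ∑ j, ∑ j', ∑ x, ∑ y, ∑ z, f x y z j j' := by
  conv_lhs => enter [2, x, 2, y]; rw [Finset.sum_comm]
  conv_lhs => enter [2, x, 2, y, 2, j]; rw [Finset.sum_comm]
  conv_lhs => enter [2, x]; rw [Finset.sum_comm]
  conv_lhs => enter [2, x, 2, j]; rw [Finset.sum_comm]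
  rw [Finset.sum_comm]
  conv_lhs => enter [2, j]; rw [Finset.sum_comm]

lemma stmt14.lemA (d1 d2 m : ℕ) (b : Fin m → Fin m → ℂ) (p : Fin m → Fin d1)
    (r : Fin m → Fin d2) (hr : Function.Injective r) (i k : Fin m) :
    ∑ pr : Fin d1 × Fin d2, star (∑ j, if pr = (p j, r j) then b i j else 0) *
      (∑ j, if pr = (p j, r j) then b k j else 0) = ∑ j, star (b i j) * b k j := by
  have hu : Function.Injective (fun j => (p j, r j) : Fin m → Fin d1 × Fin d2) := by
    intro a b h; exact hr (congrArg Prod.snd h)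
  simp only [star_sum, apply_ite (star : ℂ → ℂ), star_zero, Finset.sum_mul, Finset.mul_sum,
    ite_mul, mul_ite, zero_mul, mul_zero]
  rw [Finset.sum_comm]
  refine Finset.sum_congr rfl fun j _ => ?_
  simp [Finset.sum_ite_eq', Finset.sum_ite_eq, hu.eq_iff]

lemma stmt14.lemB (d1 d2 m : ℕ) (E : Matrix (Fin d2) (Fin d2) ℂ)
    (b : Fin m → Fin m → ℂ) (p : Fin m → Fin d1)
    (r : Fin m → Fin d2) (i k : Fin m) :
    (∑ x : Fin d1, ∑ y : Fin d2, ∑ y' : Fin d2,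
      star (∑ j, if (x, y) = (p j, r j) then b i j else 0) * E y y' *
      (∑ j', if (x, y') = (p j', r j') then b k j' else 0))
    = ∑ j, ∑ j', star (b i j) * (if p j = p j' then E (r j) (r j') else 0) * b k j' := by
  simp only [star_sum, apply_ite (star : ℂ → ℂ), star_zero, Finset.sum_mul, Finset.mul_sum]
  rw [stmt14.reorder5, Finset.sum_comm]
  refine Finset.sum_congr rfl fun j _ => Finset.sum_congr rfl fun j' _ => ?_
  simp only [Prod.mk.injEq, ite_and, ite_mul, mul_ite, zero_mul, mul_zero,
    Finset.sum_ite_irrel, Finset.sum_ite_eq', Finset.sum_ite_eq, Finset.mem_univ, if_true,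
    Finset.sum_const_zero]
  exact if_congr eq_comm rfl rfl

/-- Diagonal-equalizing lemma.  E is a Hermitian d_2×d_2 matrix,
{ψ_i = Σ_j b_{i,j}|p_j⟩|r_j⟩} a family of pairwise orthogonal vectors in
ℂ^{d_1}⊗ℂ^{d_2} with distinct r_j, and ⟨ψ_i|(I⊗E)|ψ_k⟩ = 0 for i ≠ k.  If
some index t satisfies E(r_t, r_j) = 0 for all j ≠ t and b_{i,t} ≠ 0 for all
i, then (1) E(r_i, r_j) = E(r_j, r_i) = 0 whenever i ≠ j and p_i = p_j, and
(2) all diagonal entries E(r_i, r_i) equal E(r_0, r_0). -/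
theorem stmt14 (d1 d2 m : ℕ) (h0 : 0 < m)
    (E : Matrix (Fin d2) (Fin d2) ℂ) (hE : E.IsHermitian)
    (b : Fin m → Fin m → ℂ)
    (p : Fin m → Fin d1) (r : Fin m → Fin d2) (hr : Function.Injective r)
    (ψ : Fin m → (Fin d1 × Fin d2 → ℂ))
    (hψ : ∀ i, ψ i = fun pr => ∑ j, if pr = (p j, r j) then b i j else 0)
    (hψo : ∀ i k, i ≠ k → ∑ pr : Fin d1 × Fin d2, star (ψ i pr) * ψ k pr = 0)
    (horth : ∀ i k, i ≠ k → ∑ x : Fin d1, ∑ y : Fin d2, ∑ y' : Fin d2,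
        star (ψ i (x, y)) * E y y' * ψ k (x, y') = 0)
    (t : Fin m) (ht1 : ∀ j, j ≠ t → E (r t) (r j) = 0)
    (ht2 : ∀ i, b i t ≠ 0) :
    (∀ i j : Fin m, i ≠ j → p i = p j →
      E (r i) (r j) = 0 ∧ E (r j) (r i) = 0) ∧
    (∀ i : Fin m, E (r i) (r i) = E (r ⟨0, h0⟩) (r ⟨0, h0⟩)) := by
  classical
  set Bm : Matrix (Fin m) (Fin m) ℂ := Matrix.of b with hBm
  set A : Matrix (Fin m) (Fin m) ℂ := Bm.map star with hA
  set M : Matrix (Fin m) (Fin m) ℂ :=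
    Matrix.of (fun j j' => if p j = p j' then E (r j) (r j') else 0) with hM
  set n : Fin m → ℂ := fun i => ∑ j, star (b i j) * b i j with hn
  -- orthogonality of the rows of b
  have hbo : ∀ i k, i ≠ k → ∑ j, star (b i j) * b k j = 0 := by
    intro i k h
    rw [← stmt14.lemA d1 d2 m b p r hr i k]
    simpa [hψ] using hψo i k h
  -- Gram matrix
  have hG : A * Bm.transpose = Matrix.diagonal n := by
    ext i k
    rw [Matrix.mul_apply]
    by_cases h : i = k
    · subst h; simp [hA, hBm, Matrix.diagonal, hn]
    · simp only [Matrix.diagonal_apply_ne _ h]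
      simpa [hA, hBm] using hbo i k h
  -- n is nonzero
  have hnne : ∀ i, n i ≠ 0 := by
    intro i
    have : n i = ((∑ j, Complex.normSq (b i j) : ℝ) : ℂ) := by
      push_cast [hn]
      exact Finset.sum_congr rfl fun j _ => Complex.normSq_eq_conj_mul_self.symm
    rw [this]
    have hpos : 0 < ∑ j, Complex.normSq (b i j) :=
      Finset.sum_pos' (fun j _ => Complex.normSq_nonneg _)
        ⟨t, Finset.mem_univ t, Complex.normSq_pos.mpr (ht2 i)⟩
    exact_mod_cast hpos.ne'
  -- determinants
  have hdet : A.det * Bm.transpose.det ≠ 0 := by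
    rw [← Matrix.det_mul, hG, Matrix.det_diagonal]
    exact Finset.prod_ne_zero_iff.mpr fun i _ => hnne i
  have hdetA : IsUnit A.det := isUnit_iff_ne_zero.mpr (left_ne_zero_of_mul hdet)
  have hdetB : IsUnit Bm.transpose.det := isUnit_iff_ne_zero.mpr (right_ne_zero_of_mul hdet)
  -- C is diagonal
  set C : Matrix (Fin m) (Fin m) ℂ := A * M * Bm.transpose with hC
  have hCentry : ∀ i k, C i k = ∑ j, ∑ j',
      star (b i j) * (if p j = p j' then E (r j) (r j') else 0) * b k j' := by
    intro i k
    rw [hC, Matrix.mul_apply]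
    rw [Finset.sum_comm]
    refine Finset.sum_congr rfl fun j _ => ?_
    rw [Matrix.mul_apply, Finset.sum_mul]
    exact Finset.sum_congr rfl fun j' _ => by
      simp [hA, hBm, hM, Matrix.transpose_apply]
  have hCoff : ∀ i k, i ≠ k → C i k = 0 := by
    intro i k h
    rw [hCentry i k, ← stmt14.lemB d1 d2 m E b p r i k]
    simpa [hψ] using horth i k h
  have hCdiag : C = Matrix.diagonal (fun k => C k k) := by
    ext i k
    by_cases h : i = k
    · subst h; simp
    · rw [Matrix.diagonal_apply_ne _ h]; exact hCoff i k h
  -- the key cancellation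
  set X : Matrix (Fin m) (Fin m) ℂ := Matrix.diagonal (fun k => C k k / n k) with hX
  have hAX : A * (M * Bm.transpose) = A * (Bm.transpose * X) := by
    rw [← Matrix.mul_assoc, ← Matrix.mul_assoc, ← hC, hG, hX,
      Matrix.diagonal_mul_diagonal]
    have h9 : (fun i => n i * (C i i / n i)) = fun i => C i i := by
      funext i; rw [mul_comm, div_mul_cancel₀ _ (hnne i)]
    rw [h9, ← hCdiag]
  have hNX : M * Bm.transpose = Bm.transpose * X := by
    have h2 := congrArg (fun Y => A⁻¹ * Y) hAX
    simpa [← Matrix.mul_assoc, Matrix.nonsing_inv_mul A hdetA] using h2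
  -- M's t-th row is concentrated at t
  have hMt : ∀ j, j ≠ t → M t j = 0 := by
    intro j hj
    show (if p t = p j then E (r t) (r j) else 0) = 0
    rw [ht1 j hj, ite_self]
  set c : ℂ := E (r t) (r t) with hc
  have hMtt : M t t = c := by
    show (if p t = p t then E (r t) (r t) else 0) = c
    rw [if_pos rfl]
  have hq : ∀ k, C k k / n k = c := by
    intro k
    have h1 : (M * Bm.transpose) t k = c * b k t := by
      rw [Matrix.mul_apply]
      rw [Finset.sum_eq_single t (fun j _ hj => by rw [hMt j hj, zero_mul])
        (fun h => absurd (Finset.mem_univ t) h)]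
      rw [hMtt]; rfl
    have h2 : (Bm.transpose * X) t k = b k t * (C k k / n k) := by
      rw [hX, Matrix.mul_diagonal]; rfl
    have h4 : b k t * c = b k t * (C k k / n k) := by
      rw [mul_comm (b k t) c, ← h1, hNX, h2]
    exact (mul_left_cancel₀ (ht2 k) h4).symm
  have hXc : X = Matrix.diagonal (fun _ => c) := by
    rw [hX]; exact congrArg Matrix.diagonal (funext hq)
  have hMBt : M * Bm.transpose = (c • (1 : Matrix (Fin m) (Fin m) ℂ)) * Bm.transpose := by
    rw [hNX, hXc]
    ext j k
    rw [Matrix.mul_diagonal, Matrix.smul_mul, Matrix.one_mul, Matrix.smul_apply]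
    rw [mul_comm]; rfl
  have hMc : M = c • 1 := by
    have h5 := congrArg (fun Y => Y * (Bm.transpose)⁻¹) hMBt
    simpa [Matrix.mul_assoc, Matrix.mul_nonsing_inv _ hdetB] using h5
  have hMentry : ∀ i j, M i j = if i = j then c else 0 := by
    intro i j
    rw [hMc]
    by_cases h : i = j <;> simp [h, Matrix.one_apply, Matrix.smul_apply]
  constructor
  · intro i j hij hpij
    have h1 : E (r i) (r j) = 0 := by
      have h6 := hMentry i j
      rw [if_neg hij] at h6
      rw [show M i j = (if p i = p j then E (r i) (r j) else 0) from rfl,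
        if_pos hpij] at h6
      exact h6
    refine ⟨h1, ?_⟩
    rw [← hE.apply (r j) (r i), h1, star_zero]
  · have hd : ∀ i, E (r i) (r i) = c := by
      intro i
      have h6 := hMentry i i
      rw [if_pos rfl] at h6
      rw [show M i i = (if p i = p i then E (r i) (r i) else 0) from rfl,
        if_pos rfl] at h6
      exact h6
    intro i
    rw [hd i, hd ⟨0, h0⟩]
end

section
/- The state |ψ_s⟩ = |0⟩|0⟩|i⟩ + ω^s|0⟩|i⟩|0⟩ + ω^{2s}|i⟩|0⟩|0⟩ in ℂ^d⊗ℂ^d⊗ℂ^d (with i ≠ 0, ω = e^{2πi/3}, s ∈ Z_3) is mapped by a product of three local unitaries to the three-qubit W state |001⟩+|010⟩+|100⟩ embedded in (ℂ^d)^{⊗3}; in particular it is a genuinely entangled state, i.e., it has Schmidt rank ≥ 2 across each of the three bipartitions A_1|A_2A_3, A_2|A_1A_3, A_3|A_1A_2. -/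
/-!
The transposition `swap 1 i` fixes `0` and carries `|00i⟩, |0i0⟩, |i00⟩` to
`|001⟩, |010⟩, |100⟩`; following it on each factor by a diagonal unitary with a single
nonconstant phase cancels the phases `ω^s, ω^{2s}` of the three branches. For genuine
entanglement, each of the three flattenings of `|ψ_s⟩` contains a `2 × 2` minor that is
diagonal with nonzero entries.
-/

open Matrix Equiv

section Rank

variable {m n k K : Type*} [Fintype n] [Fintype k] [DecidableEq k] [Field K]

theorem Matrix.card_le_rank_of_det_submatrix_ne_zero (A : Matrix m n K) (r : k → m) (c : k → n)
    (h : (A.submatrix r c).det ≠ 0) : Fintype.card k ≤ A.rank := by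
  rw [← rank_of_isUnit _ ((isUnit_iff_isUnit_det _).2 h.isUnit)]
  exact rank_submatrix_le A r c

theorem Matrix.two_le_rank_of_mul_sub_mul_ne_zero (A : Matrix m n K) (r₁ r₂ : m) (c₁ c₂ : n)
    (h : A r₁ c₁ * A r₂ c₂ - A r₁ c₂ * A r₂ c₁ ≠ 0) : 2 ≤ A.rank := by
  simpa using A.card_le_rank_of_det_submatrix_ne_zero ![r₁, r₂] ![c₁, c₂]
    (by rw [det_fin_two]; simpa)

end Rank

section Unitary

variable {n R : Type*} [Fintype n] [DecidableEq n] [CommRing R] [StarRing R]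

theorem Matrix.permMatrix_mem_unitaryGroup (σ : Perm n) :
    σ.permMatrix R ∈ unitaryGroup n R := by
  rw [mem_unitaryGroup_iff, star_eq_conjTranspose, conjTranspose_permMatrix, ← permMatrix_mul,
    inv_mul_cancel, permMatrix_one]

theorem Matrix.diagonal_mem_unitaryGroup {w : n → R} (hw : ∀ a, w a ∈ unitary R) :
    diagonal w ∈ unitaryGroup n R := by
  rw [mem_unitaryGroup_iff, star_eq_conjTranspose, diagonal_conjTranspose, diagonal_mul_diagonal,
    ← diagonal_one]
  exact congrArg diagonal (funext fun a => Unitary.mul_star_self_of_mem (hw a))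

end Unitary

section Monomial

variable {n₁ n₂ n₃ R : Type*} [Fintype n₁] [DecidableEq n₁] [Fintype n₂] [DecidableEq n₂]
  [Fintype n₃] [DecidableEq n₃] [CommRing R]

theorem Matrix.sum_diagonal_mul_permMatrix_mul (w : n₁ → R) (σ : Perm n₁) (f : n₁ → R)
    (t : n₁) : ∑ a, (diagonal w * σ.permMatrix R) t a * f a = w t * f (σ t) := by
  simp

theorem sum_sum_sum_diagonal_mul_permMatrix_mul (w₁ : n₁ → R) (w₂ : n₂ → R) (w₃ : n₃ → R)
    (σ₁ : Perm n₁) (σ₂ : Perm n₂) (σ₃ : Perm n₃) (ψ : n₁ × n₂ × n₃ → R) (t : n₁ × n₂ × n₃) :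
    ∑ a, ∑ b, ∑ c, (diagonal w₁ * σ₁.permMatrix R) t.1 a *
        (diagonal w₂ * σ₂.permMatrix R) t.2.1 b * (diagonal w₃ * σ₃.permMatrix R) t.2.2 c *
        ψ (a, b, c) =
      w₁ t.1 * w₂ t.2.1 * w₃ t.2.2 * ψ (σ₁ t.1, σ₂ t.2.1, σ₃ t.2.2) := by
  simp only [mul_assoc, ← Finset.mul_sum, sum_diagonal_mul_permMatrix_mul]

end Monomial

theorem Complex.exp_mul_I_mem_unitary (θ : ℝ) : Complex.exp (θ * Complex.I) ∈ unitary ℂ := by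
  rw [Unitary.mem_iff_star_mul_self, Complex.star_def, ← Complex.exp_conj, ← Complex.exp_add]
  simp

def wState {n R : Type*} [Zero n] [DecidableEq n] [Zero R] (i : n) (α β γ : R) :
    n × n × n → R := fun t =>
  if t = (0, 0, i) then α else if t = (0, i, 0) then β else if t = (i, 0, 0) then γ else 0

section WState

variable {n R : Type*} [Zero n] [DecidableEq n]

theorem wState_comp_perm [Zero R] (σ : Perm n) (hσ : σ 0 = 0) (i : n) (α β γ : R)
    (t : n × n × n) :
    wState i α β γ (σ t.1, σ t.2.1, σ t.2.2) = wState (σ.symm i) α β γ t := by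
  have h0 : σ.symm 0 = 0 := σ.symm_apply_eq.2 hσ.symm
  obtain ⟨a, b, c⟩ := t
  simp only [wState, Prod.mk.injEq, ← σ.eq_symm_apply, h0]

theorem mul_wState [CommMonoidWithZero R] (w₁ w₂ w₃ : n → R) (j : n) (α β γ : R) :
    (fun t : n × n × n => w₁ t.1 * w₂ t.2.1 * w₃ t.2.2 * wState j α β γ t) =
      wState j (w₁ 0 * w₂ 0 * w₃ j * α) (w₁ 0 * w₂ j * w₃ 0 * β)
        (w₁ j * w₂ 0 * w₃ 0 * γ) := by
  funext t
  unfold wState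
  split_ifs <;> simp_all

end WState

theorem Function.update_one_mem_unitary {n R : Type*} [DecidableEq n] [Monoid R] [StarMul R]
    (j : n) {u : R} (hu : u ∈ unitary R) (a : n) :
    Function.update (1 : n → R) j u a ∈ unitary R := by
  rcases eq_or_ne a j with rfl | h
  · simpa using hu
  · simp [h]

theorem exists_localUnitaries_wState_eq {n R : Type*} [Fintype n] [DecidableEq n] [Zero n]
    [CommRing R] [StarRing R] {i j : n} (hi : i ≠ 0) (hj : j ≠ 0) {α β γ : R}
    (hα : α ∈ unitary R) (hβ : β ∈ unitary R) (hγ : γ ∈ unitary R) :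
    ∃ U₁ U₂ U₃ : Matrix n n R,
      U₁ ∈ unitaryGroup n R ∧ U₂ ∈ unitaryGroup n R ∧ U₃ ∈ unitaryGroup n R ∧
      (fun t : n × n × n => ∑ a, ∑ b, ∑ c,
          U₁ t.1 a * U₂ t.2.1 b * U₃ t.2.2 c * wState i α β γ (a, b, c)) = wState j 1 1 1 := by
  set σ := swap j i
  have hσ0 : σ 0 = 0 := swap_apply_of_ne_of_ne hj.symm hi.symm
  have hσi : σ.symm i = j := by simp [σ]
  let U (u : R) : Matrix n n R := diagonal (Function.update 1 j u) * σ.permMatrix R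
  have hU {u : R} (hu : u ∈ unitary R) : U u ∈ unitaryGroup n R :=
    mul_mem (diagonal_mem_unitaryGroup (Function.update_one_mem_unitary j hu))
      (permMatrix_mem_unitaryGroup σ)
  refine ⟨U (star γ), U (star β), U (star α), hU (Unitary.star_mem hγ),
    hU (Unitary.star_mem hβ), hU (Unitary.star_mem hα), ?_⟩
  simp only [U, sum_sum_sum_diagonal_mul_permMatrix_mul, wState_comp_perm σ hσ0, hσi, mul_wState]
  simp [hj.symm, Unitary.star_mul_self_of_mem, hα, hβ, hγ]

def IsGenuinelyEntangled {n₁ n₂ n₃ R : Type*} [Fintype n₁] [Fintype n₂] [Fintype n₃]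
    [CommRing R] (ψ : n₁ × n₂ × n₃ → R) : Prop :=
  2 ≤ (Matrix.of fun (a : n₁) (bc : n₂ × n₃) => ψ (a, bc.1, bc.2)).rank ∧
    2 ≤ (Matrix.of fun (b : n₂) (ac : n₁ × n₃) => ψ (ac.1, b, ac.2)).rank ∧
    2 ≤ (Matrix.of fun (c : n₃) (ab : n₁ × n₂) => ψ (ab.1, ab.2, c)).rank

theorem wState_isGenuinelyEntangled {n K : Type*} [Fintype n] [DecidableEq n] [Zero n]
    [Field K] {i : n} (hi : i ≠ 0) {α β γ : K} (hα : α ≠ 0) (hβ : β ≠ 0) (hγ : γ ≠ 0) :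
    IsGenuinelyEntangled (wState i α β γ) := by
  refine ⟨two_le_rank_of_mul_sub_mul_ne_zero _ 0 i (0, i) (0, 0) ?_,
    two_le_rank_of_mul_sub_mul_ne_zero _ 0 i (0, i) (0, 0) ?_,
    two_le_rank_of_mul_sub_mul_ne_zero _ i 0 (0, 0) (0, i) ?_⟩ <;>
  simp [wState, hi, hi.symm, hα, hβ, hγ]

/-- The state |ψ_s⟩ = |00i⟩ + ω^s|0i0⟩ + ω^{2s}|i00⟩ (i ≠ 0, ω = e^{2πi/3})
is mapped by a product of three local unitaries to the three-qubit W state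
|001⟩+|010⟩+|100⟩ embedded in (ℂ^d)^{⊗3}; in particular it has Schmidt rank
≥ 2 across each of the three bipartitions, i.e. it is genuinely entangled. -/
theorem stmt15 (d : ℕ) [NeZero d] (hd : 2 ≤ d) (i : Fin d) (hi : i ≠ 0)
    (s : ℕ) (ψ : Fin d × Fin d × Fin d → ℂ)
    (hψ : ψ = fun t => if t = (0, 0, i) then 1
      else if t = (0, i, 0) then Complex.exp (2 * Real.pi * Complex.I * (s : ℂ) / 3)
      else if t = (i, 0, 0) then Complex.exp (2 * Real.pi * Complex.I * (2 * s : ℂ) / 3)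
      else 0) :
    (∃ U1 U2 U3 : Matrix (Fin d) (Fin d) ℂ,
      U1 ∈ Matrix.unitaryGroup (Fin d) ℂ ∧ U2 ∈ Matrix.unitaryGroup (Fin d) ℂ ∧
      U3 ∈ Matrix.unitaryGroup (Fin d) ℂ ∧
      (fun t : Fin d × Fin d × Fin d => ∑ a : Fin d, ∑ b : Fin d, ∑ c : Fin d,
          U1 t.1 a * U2 t.2.1 b * U3 t.2.2 c * ψ (a, b, c)) =
        fun t => if t = (0, 0, 1) then 1 else if t = (0, 1, 0) then 1
          else if t = (1, 0, 0) then 1 else 0) ∧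
    2 ≤ (Matrix.of fun (a : Fin d) (bc : Fin d × Fin d) => ψ (a, bc.1, bc.2)).rank ∧
    2 ≤ (Matrix.of fun (b : Fin d) (ac : Fin d × Fin d) => ψ (ac.1, b, ac.2)).rank ∧
    2 ≤ (Matrix.of fun (c : Fin d) (ab : Fin d × Fin d) => ψ (ab.1, ab.2, c)).rank := by
  have hω (k : ℕ) : Complex.exp (2 * Real.pi * Complex.I * k / 3) ∈ unitary ℂ := by
    convert Complex.exp_mul_I_mem_unitary (2 * Real.pi * k / 3) using 2
    push_cast
    ring
  have hψ' : ψ = wState i 1 (Complex.exp (2 * Real.pi * Complex.I * s / 3))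
      (Complex.exp (2 * Real.pi * Complex.I * (2 * s) / 3)) := hψ
  have h10 : (1 : Fin d) ≠ 0 := Fin.ne_of_val_ne (by simp [Nat.mod_eq_of_lt hd])
  subst hψ'
  exact ⟨exists_localUnitaries_wState_eq hi h10 (one_mem _) (hω s) (by exact_mod_cast hω (2 * s)),
    wState_isGenuinelyEntangled hi one_ne_zero (Complex.exp_ne_zero _) (Complex.exp_ne_zero _)⟩
end

section
/- Every state in the set B_d^3 (the triple-cyclic-orbit construction in ℂ^d⊗ℂ^d⊗ℂ^d) is genuinely entangled: for all d ≥ 2, each of the d^3-(d-1)^3+1 states has Schmidt rank ≥ 2 across each of the three bipartitions A_1|A_2A_3, A_2|A_1A_3, A_3|A_1A_2. -/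
lemma aux_rank_two {m n : Type*} [Fintype m] [Fintype n] [DecidableEq m] [DecidableEq n]
    (M : Matrix m n ℂ) (r1 r2 : m) (c1 c2 : n) (hr : r1 ≠ r2)
    (h1 : M r1 c1 ≠ 0) (h2 : M r2 c2 ≠ 0) (h12 : M r1 c2 = 0) (h21 : M r2 c1 = 0) :
    2 ≤ M.rank := by
  classical
  set f : Fin 2 → m := ![r1, r2]
  set g : Fin 2 → n := ![c1, c2]
  set F : Matrix (Fin 2) m ℂ := Matrix.of fun k i => if i = f k then 1 else 0
  set E : Matrix n (Fin 2) ℂ := Matrix.of fun j k => if j = g k then 1 else 0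
  have hS : F * M * E = M.submatrix f g := by
    ext k l
    simp [F, E, Matrix.mul_apply, ite_mul, mul_ite, Finset.sum_ite_eq', Finset.sum_ite_eq]
  have hdet : (M.submatrix f g).det ≠ 0 := by
    rw [Matrix.det_fin_two]
    simp only [Matrix.submatrix_apply, f, g, Matrix.cons_val_zero, Matrix.cons_val_one,
      Matrix.head_cons, h12, h21]
    simpa using mul_ne_zero h1 h2
  have hrank : (M.submatrix f g).rank = 2 := by
    rw [Matrix.rank_of_isUnit _ ((Matrix.isUnit_iff_isUnit_det _).2 (isUnit_iff_ne_zero.2 hdet))]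
    simp
  calc 2 = (F * M * E).rank := by rw [hS, hrank]
    _ ≤ (F * M).rank := Matrix.rank_mul_le_left _ _
    _ ≤ M.rank := Matrix.rank_mul_le_right _ _

/-- Every state in the set B_d^3 (the triple-cyclic-orbit construction in
ℂ^d⊗ℂ^d⊗ℂ^d, d ≥ 2) is genuinely entangled: it has Schmidt rank ≥ 2 across
each of the three bipartitions A_1|A_2A_3, A_2|A_1A_3, A_3|A_1A_2. -/
theorem stmt16 (d : ℕ) [NeZero d] (hd : 2 ≤ d)
    (ψ : Fin d × Fin d × Fin d → ℂ)
    (hψ :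
      (ψ = fun t => if t = (0, 0, 0) then 1 else if t = (1, 1, 1) then 1 else 0) ∨
      (ψ = fun t => if t = (0, 0, 0) then 1 else if t = (1, 1, 1) then -1 else 0) ∨
      (∃ i : Fin d, i ≠ 0 ∧ ∃ s : ℕ, ψ = fun t =>
        if t = (0, 0, i) then 1
        else if t = (0, i, 0) then Complex.exp (2 * Real.pi * Complex.I * (s : ℂ) / 3)
        else if t = (i, 0, 0) then Complex.exp (2 * Real.pi * Complex.I * (2 * s : ℂ) / 3)
        else 0) ∨
      (∃ i : Fin d, i ≠ 0 ∧ ∃ s : ℕ, ψ = fun t =>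
        if t = (0, i, i) then 1
        else if t = (i, i, 0) then Complex.exp (2 * Real.pi * Complex.I * (s : ℂ) / 3)
        else if t = (i, 0, i) then Complex.exp (2 * Real.pi * Complex.I * (2 * s : ℂ) / 3)
        else 0) ∨
      (∃ i j : Fin d, i ≠ 0 ∧ j ≠ 0 ∧ i ≠ j ∧ ∃ s : ℕ, ψ = fun t =>
        if t = (0, i, j) then 1
        else if t = (i, j, 0) then Complex.exp (2 * Real.pi * Complex.I * (s : ℂ) / 3)
        else if t = (j, 0, i) then Complex.exp (2 * Real.pi * Complex.I * (2 * s : ℂ) / 3)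
        else 0)) :
    2 ≤ (Matrix.of fun (a : Fin d) (bc : Fin d × Fin d) => ψ (a, bc.1, bc.2)).rank ∧
    2 ≤ (Matrix.of fun (b : Fin d) (ac : Fin d × Fin d) => ψ (ac.1, b, ac.2)).rank ∧
    2 ≤ (Matrix.of fun (c : Fin d) (ab : Fin d × Fin d) => ψ (ab.1, ab.2, c)).rank := by
  obtain ⟨k, rfl⟩ : ∃ k, d = k + 2 := ⟨d - 2, by omega⟩
  have h01 : (0 : Fin (k + 2)) ≠ 1 := by simp
  have h10 : (1 : Fin (k + 2)) ≠ 0 := by simp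
  rcases hψ with rfl | rfl | ⟨i, hi, s, rfl⟩ | ⟨i, hi, s, rfl⟩ | ⟨i, j, hi, hj, hij, s, rfl⟩
  · refine ⟨aux_rank_two _ 0 1 (0, 0) (1, 1) h01 ?_ ?_ ?_ ?_,
      aux_rank_two _ 0 1 (0, 0) (1, 1) h01 ?_ ?_ ?_ ?_,
      aux_rank_two _ 0 1 (0, 0) (1, 1) h01 ?_ ?_ ?_ ?_⟩ <;>
    simp [Prod.ext_iff, h01, h10]
  · refine ⟨aux_rank_two _ 0 1 (0, 0) (1, 1) h01 ?_ ?_ ?_ ?_,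
      aux_rank_two _ 0 1 (0, 0) (1, 1) h01 ?_ ?_ ?_ ?_,
      aux_rank_two _ 0 1 (0, 0) (1, 1) h01 ?_ ?_ ?_ ?_⟩ <;>
    simp [Prod.ext_iff, h01, h10]
  · refine ⟨aux_rank_two _ 0 i (0, i) (0, 0) (Ne.symm hi) ?_ ?_ ?_ ?_,
      aux_rank_two _ 0 i (0, i) (0, 0) (Ne.symm hi) ?_ ?_ ?_ ?_,
      aux_rank_two _ i 0 (0, 0) (0, i) hi ?_ ?_ ?_ ?_⟩ <;>
    simp [Prod.ext_iff, hi, Ne.symm hi, Complex.exp_ne_zero]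
  · refine ⟨aux_rank_two _ 0 i (i, i) (i, 0) (Ne.symm hi) ?_ ?_ ?_ ?_,
      aux_rank_two _ i 0 (0, i) (i, i) hi ?_ ?_ ?_ ?_,
      aux_rank_two _ i 0 (0, i) (i, i) hi ?_ ?_ ?_ ?_⟩ <;>
    simp [Prod.ext_iff, hi, Ne.symm hi, Complex.exp_ne_zero]
  · refine ⟨aux_rank_two _ 0 i (i, j) (j, 0) (Ne.symm hi) ?_ ?_ ?_ ?_,
      aux_rank_two _ i j (0, j) (i, 0) hij ?_ ?_ ?_ ?_,
      aux_rank_two _ j 0 (0, i) (i, j) hj ?_ ?_ ?_ ?_⟩ <;>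
    simp [Prod.ext_iff, hi, hj, hij, Ne.symm hi, Ne.symm hj, Ne.symm hij, Complex.exp_ne_zero]
end

section
/- Let the 4×4 integer matrix B̃ have rows (1,1,1,2), (1,-1,2,-1), (5,5,-2,-4), (5,-5,-4,2). Then the rows of B̃ are pairwise orthogonal, and for each s ∈ Z_4 and i ∈ [d-1], the state |λ_s⟩ = b_{s,0}|00ii⟩ + b_{s,1}|0ii0⟩ + b_{s,2}|ii00⟩ + b_{s,3}|i00i⟩ in (ℂ^d)^{⊗4} has Schmidt rank exactly 2 across the bipartitions A_1|A_2A_3A_4, A_2|A_1A_3A_4, A_3|A_1A_2A_4, A_4|A_1A_2A_3, A_1A_3|A_2A_4, and Schmidt rank exactly 4 across A_1A_2|A_3A_4 and A_1A_4|A_2A_3; in particular |λ_s⟩ is genuinely entangled. -/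
/-!
Every flattening of `λ_s` is supported on at most two (resp. four) rows, which bounds its rank
from above, and it contains a 2×2 (resp. 4×4) minor that is nonzero because the entries of
`B̃` are nonzero. Only the cut `A₁A₃|A₂A₄` mixes coefficients: there the minor is
`b₀b₂ - b₁b₃`, which is nonzero for each row of `B̃`.
-/

open scoped Matrix

namespace Matrix

variable {m n K : Type*} [Fintype n] [DecidableEq m] [Field K]

theorem rank_eq_of_det_submatrix_ne_zero {k : ℕ} (A : Matrix m n K) (r : Fin k → m)
    (c : Fin k → n) (hA : ∀ a x, A a x ≠ 0 → a ∈ Set.range r)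
    (hdet : (A.submatrix r c).det ≠ 0) : A.rank = k := by
  refine le_antisymm ?_ ?_
  · calc A.rank ≤ (Finset.univ.image r).card := by
          refine A.rank_le_card_of_support_subset _ fun a ha => ?_
          obtain ⟨x, hx⟩ := Function.ne_iff.mp ha
          simpa using hA a x hx
      _ ≤ k := Finset.card_image_le.trans_eq (Finset.card_fin k)
  · calc k = (A.submatrix r c).rank := by
          rw [rank_of_isUnit _ ((isUnit_iff_isUnit_det _).mpr hdet.isUnit), Fintype.card_fin]
      _ ≤ A.rank := rank_submatrix_le A r c

theorem rank_eq_of_submatrix_eq_diagonal {k : ℕ} (A : Matrix m n K) (r : Fin k → m)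
    (c : Fin k → n) (hA : ∀ a x, A a x ≠ 0 → a ∈ Set.range r) {v : Fin k → K}
    (hv : ∀ j, v j ≠ 0) (hsub : A.submatrix r c = diagonal v) : A.rank = k :=
  A.rank_eq_of_det_submatrix_ne_zero r c hA <| by
    rw [hsub, det_diagonal]
    exact Finset.prod_ne_zero_iff.mpr fun j _ => hv j

end Matrix

section CyclicShiftState

variable {ι K : Type*} [DecidableEq ι] [Field K] {p q : ι} {b : Fin 4 → K}

variable (p q b) in
/-- The paper's `|λ_s⟩` is the case `p = 0`, `q = i`, `b = b_s`. -/
def cyclicShiftState (t : ι × ι × ι × ι) : K :=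
  if t = (p, p, q, q) then b 0
  else if t = (p, q, q, p) then b 1
  else if t = (q, q, p, p) then b 2
  else if t = (q, p, p, q) then b 3 else 0

theorem cyclicShiftState_ne_zero {t : ι × ι × ι × ι} (ht : cyclicShiftState p q b t ≠ 0) :
    t = (p, p, q, q) ∨ t = (p, q, q, p) ∨ t = (q, q, p, p) ∨ t = (q, p, p, q) := by
  unfold cyclicShiftState at ht
  split_ifs at ht <;> simp_all

variable [Fintype ι]

theorem rank_flatten_first_cyclicShiftState (hpq : p ≠ q) (hb : ∀ j, b j ≠ 0) :
    (Matrix.of fun a (x : ι × ι × ι) =>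
      cyclicShiftState p q b (a, x.1, x.2.1, x.2.2)).rank = 2 := by
  refine Matrix.rank_eq_of_submatrix_eq_diagonal _ ![p, q] ![(p, q, q), (p, p, q)] ?_
    (v := ![b 0, b 3]) (by simpa [Fin.forall_fin_two] using ⟨hb 0, hb 3⟩) ?_
  · intro a x hx
    rcases cyclicShiftState_ne_zero hx with h | h | h | h <;> simp_all [Prod.ext_iff]
  · ext j j'
    fin_cases j <;> fin_cases j' <;> simp [cyclicShiftState, hpq, hpq.symm]

theorem rank_flatten_second_cyclicShiftState (hpq : p ≠ q) (hb : ∀ j, b j ≠ 0) :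
    (Matrix.of fun a (x : ι × ι × ι) =>
      cyclicShiftState p q b (x.1, a, x.2.1, x.2.2)).rank = 2 := by
  refine Matrix.rank_eq_of_submatrix_eq_diagonal _ ![p, q] ![(p, q, q), (p, q, p)] ?_
    (v := ![b 0, b 1]) (by simpa [Fin.forall_fin_two] using ⟨hb 0, hb 1⟩) ?_
  · intro a x hx
    rcases cyclicShiftState_ne_zero hx with h | h | h | h <;> simp_all [Prod.ext_iff]
  · ext j j'
    fin_cases j <;> fin_cases j' <;> simp [cyclicShiftState, hpq, hpq.symm]

theorem rank_flatten_third_cyclicShiftState (hpq : p ≠ q) (hb : ∀ j, b j ≠ 0) :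
    (Matrix.of fun a (x : ι × ι × ι) =>
      cyclicShiftState p q b (x.1, x.2.1, a, x.2.2)).rank = 2 := by
  refine Matrix.rank_eq_of_submatrix_eq_diagonal _ ![p, q] ![(q, q, p), (p, p, q)] ?_
    (v := ![b 2, b 0]) (by simpa [Fin.forall_fin_two] using ⟨hb 2, hb 0⟩) ?_
  · intro a x hx
    rcases cyclicShiftState_ne_zero hx with h | h | h | h <;> simp_all [Prod.ext_iff]
  · ext j j'
    fin_cases j <;> fin_cases j' <;> simp [cyclicShiftState, hpq, hpq.symm]

theorem rank_flatten_fourth_cyclicShiftState (hpq : p ≠ q) (hb : ∀ j, b j ≠ 0) :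
    (Matrix.of fun a (x : ι × ι × ι) =>
      cyclicShiftState p q b (x.1, x.2.1, x.2.2, a)).rank = 2 := by
  refine Matrix.rank_eq_of_submatrix_eq_diagonal _ ![p, q] ![(p, q, q), (p, p, q)] ?_
    (v := ![b 1, b 0]) (by simpa [Fin.forall_fin_two] using ⟨hb 1, hb 0⟩) ?_
  · intro a x hx
    rcases cyclicShiftState_ne_zero hx with h | h | h | h <;> simp_all [Prod.ext_iff]
  · ext j j'
    fin_cases j <;> fin_cases j' <;> simp [cyclicShiftState, hpq, hpq.symm]

theorem rank_flatten_first_third_cyclicShiftState (hpq : p ≠ q) (hb : b 0 * b 2 ≠ b 1 * b 3) :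
    (Matrix.of fun (ac : ι × ι) (be : ι × ι) =>
      cyclicShiftState p q b (ac.1, be.1, ac.2, be.2)).rank = 2 := by
  refine Matrix.rank_eq_of_det_submatrix_ne_zero _ ![(p, q), (q, p)] ![(p, q), (q, p)] ?_ ?_
  · intro a x hx
    rcases cyclicShiftState_ne_zero hx with h | h | h | h <;> simp_all [Prod.ext_iff]
  · rw [Matrix.det_fin_two]
    simpa [cyclicShiftState, hpq, hpq.symm, sub_eq_zero] using hb

theorem rank_flatten_first_second_cyclicShiftState (hpq : p ≠ q) (hb : ∀ j, b j ≠ 0) :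
    (Matrix.of fun (ab : ι × ι) (ce : ι × ι) =>
      cyclicShiftState p q b (ab.1, ab.2, ce.1, ce.2)).rank = 4 := by
  refine Matrix.rank_eq_of_submatrix_eq_diagonal _ ![(p, p), (p, q), (q, q), (q, p)]
    ![(q, q), (q, p), (p, p), (p, q)] ?_ hb ?_
  · intro a x hx
    rcases cyclicShiftState_ne_zero hx with h | h | h | h <;> simp_all [Prod.ext_iff]
  · ext j j'
    fin_cases j <;> fin_cases j' <;> simp [cyclicShiftState, hpq, hpq.symm]

theorem rank_flatten_first_fourth_cyclicShiftState (hpq : p ≠ q) (hb : ∀ j, b j ≠ 0) :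
    (Matrix.of fun (ae : ι × ι) (bc : ι × ι) =>
      cyclicShiftState p q b (ae.1, bc.1, bc.2, ae.2)).rank = 4 := by
  refine Matrix.rank_eq_of_submatrix_eq_diagonal _ ![(p, q), (p, p), (q, p), (q, q)]
    ![(p, q), (q, q), (q, p), (p, p)] ?_ hb ?_
  · intro a x hx
    rcases cyclicShiftState_ne_zero hx with h | h | h | h <;> simp_all [Prod.ext_iff]
  · ext j j'
    fin_cases j <;> fin_cases j' <;> simp [cyclicShiftState, hpq, hpq.symm]

end CyclicShiftState

section BTilde

variable {R : Type*} [Ring R]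

def bTilde : Matrix (Fin 4) (Fin 4) R :=
  !![1, 1, 1, 2; 1, -1, 2, -1; 5, 5, -2, -4; 5, -5, -4, 2]

theorem bTilde_mul_transpose :
    (bTilde : Matrix (Fin 4) (Fin 4) R) * bTildeᵀ = Matrix.diagonal ![7, 7, 70, 70] := by
  ext u v
  fin_cases u <;> fin_cases v <;>
    norm_num [bTilde, Matrix.mul_apply, Fin.sum_univ_four, Matrix.diagonal,
      Matrix.cons_val_two, Matrix.cons_val_three, Matrix.tail_cons, Matrix.head_cons]

theorem bTilde_rows_orthogonal {u v : Fin 4} (huv : u ≠ v) :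
    ∑ j, (bTilde : Matrix (Fin 4) (Fin 4) R) u j * bTilde v j = 0 := by
  simpa [Matrix.mul_apply, huv] using congrFun₂ bTilde_mul_transpose u v

variable [CharZero R]

theorem bTilde_apply_ne_zero (s j : Fin 4) : (bTilde : Matrix (Fin 4) (Fin 4) R) s j ≠ 0 := by
  fin_cases s <;> fin_cases j <;> norm_num [bTilde]

theorem bTilde_cross_ne (s : Fin 4) :
    (bTilde : Matrix (Fin 4) (Fin 4) R) s 0 * bTilde s 2 ≠ bTilde s 1 * bTilde s 3 := by
  fin_cases s <;>
    norm_num [bTilde, Matrix.cons_val_two, Matrix.cons_val_three, Matrix.tail_cons,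
      Matrix.head_cons]

end BTilde

theorem stmt18_general (d : ℕ) [NeZero d] (i : Fin d) (hi : i ≠ 0)
    (s : Fin 4) (Bt : Matrix (Fin 4) (Fin 4) ℂ)
    (hBt : Bt = !![1, 1, 1, 2; 1, -1, 2, -1; 5, 5, -2, -4; 5, -5, -4, 2])
    (ψ : Fin d × Fin d × Fin d × Fin d → ℂ)
    (hψ : ψ = fun t => if t = (0, 0, i, i) then Bt s 0
      else if t = (0, i, i, 0) then Bt s 1
      else if t = (i, i, 0, 0) then Bt s 2
      else if t = (i, 0, 0, i) then Bt s 3 else 0) :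
    (∀ u v : Fin 4, u ≠ v → ∑ j, Bt u j * Bt v j = 0) ∧
    (Matrix.of fun (a : Fin d) (x : Fin d × Fin d × Fin d) =>
      ψ (a, x.1, x.2.1, x.2.2)).rank = 2 ∧
    (Matrix.of fun (b : Fin d) (x : Fin d × Fin d × Fin d) =>
      ψ (x.1, b, x.2.1, x.2.2)).rank = 2 ∧
    (Matrix.of fun (c : Fin d) (x : Fin d × Fin d × Fin d) =>
      ψ (x.1, x.2.1, c, x.2.2)).rank = 2 ∧
    (Matrix.of fun (e : Fin d) (x : Fin d × Fin d × Fin d) =>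
      ψ (x.1, x.2.1, x.2.2, e)).rank = 2 ∧
    (Matrix.of fun (ac : Fin d × Fin d) (be : Fin d × Fin d) =>
      ψ (ac.1, be.1, ac.2, be.2)).rank = 2 ∧
    (Matrix.of fun (ab : Fin d × Fin d) (ce : Fin d × Fin d) =>
      ψ (ab.1, ab.2, ce.1, ce.2)).rank = 4 ∧
    (Matrix.of fun (ae : Fin d × Fin d) (bc : Fin d × Fin d) =>
      ψ (ae.1, bc.1, bc.2, ae.2)).rank = 4 := by
  obtain rfl : Bt = bTilde := hBt
  obtain rfl : ψ = cyclicShiftState 0 i (bTilde s) := hψ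
  have hb := bTilde_apply_ne_zero (R := ℂ) s
  exact ⟨fun u v => bTilde_rows_orthogonal,
    rank_flatten_first_cyclicShiftState hi.symm hb,
    rank_flatten_second_cyclicShiftState hi.symm hb,
    rank_flatten_third_cyclicShiftState hi.symm hb,
    rank_flatten_fourth_cyclicShiftState hi.symm hb,
    rank_flatten_first_third_cyclicShiftState hi.symm (bTilde_cross_ne s),
    rank_flatten_first_second_cyclicShiftState hi.symm hb,
    rank_flatten_first_fourth_cyclicShiftState hi.symm hb⟩

/-- The rows of the 4×4 matrix B̃ = [(1,1,1,2),(1,-1,2,-1),(5,5,-2,-4),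
(5,-5,-4,2)] are pairwise orthogonal, and for each row s and i ≠ 0 the state
|λ_s⟩ = b_{s,0}|00ii⟩ + b_{s,1}|0ii0⟩ + b_{s,2}|ii00⟩ + b_{s,3}|i00i⟩ in
(ℂ^d)^{⊗4} has Schmidt rank exactly 2 across A_1|A_2A_3A_4, A_2|A_1A_3A_4,
A_3|A_1A_2A_4, A_4|A_1A_2A_3 and A_1A_3|A_2A_4, and Schmidt rank exactly 4
across A_1A_2|A_3A_4 and A_1A_4|A_2A_3; in particular it is genuinely
entangled. -/
theorem stmt18 (d : ℕ) [NeZero d] (hd : 2 ≤ d) (i : Fin d) (hi : i ≠ 0)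
    (s : Fin 4) (Bt : Matrix (Fin 4) (Fin 4) ℂ)
    (hBt : Bt = !![1, 1, 1, 2; 1, -1, 2, -1; 5, 5, -2, -4; 5, -5, -4, 2])
    (ψ : Fin d × Fin d × Fin d × Fin d → ℂ)
    (hψ : ψ = fun t => if t = (0, 0, i, i) then Bt s 0
      else if t = (0, i, i, 0) then Bt s 1
      else if t = (i, i, 0, 0) then Bt s 2
      else if t = (i, 0, 0, i) then Bt s 3 else 0) :
    (∀ u v : Fin 4, u ≠ v → ∑ j, Bt u j * Bt v j = 0) ∧
    (Matrix.of fun (a : Fin d) (x : Fin d × Fin d × Fin d) =>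
      ψ (a, x.1, x.2.1, x.2.2)).rank = 2 ∧
    (Matrix.of fun (b : Fin d) (x : Fin d × Fin d × Fin d) =>
      ψ (x.1, b, x.2.1, x.2.2)).rank = 2 ∧
    (Matrix.of fun (c : Fin d) (x : Fin d × Fin d × Fin d) =>
      ψ (x.1, x.2.1, c, x.2.2)).rank = 2 ∧
    (Matrix.of fun (e : Fin d) (x : Fin d × Fin d × Fin d) =>
      ψ (x.1, x.2.1, x.2.2, e)).rank = 2 ∧
    (Matrix.of fun (ac : Fin d × Fin d) (be : Fin d × Fin d) =>
      ψ (ac.1, be.1, ac.2, be.2)).rank = 2 ∧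
    (Matrix.of fun (ab : Fin d × Fin d) (ce : Fin d × Fin d) =>
      ψ (ab.1, ab.2, ce.1, ce.2)).rank = 4 ∧
    (Matrix.of fun (ae : Fin d × Fin d) (bc : Fin d × Fin d) =>
      ψ (ae.1, bc.1, bc.2, ae.2)).rank = 4 :=
  stmt18_general d i hi s Bt hBt ψ hψ
end
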